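/- Fix n ≥ 2. For every lattice class [Λ] in the convex closure of the set {[⋀²Λ_0], …, [⋀²Λ_{n−1}]} of wedge squares of the standard lattice chain in K^n, there exist indices i, j ∈ {0,…,n−1} such that [Λ] lies in the convex closure of the two-element set {[⋀²Λ_i], [⋀²Λ_j]}. (Key computations: π^m ⋀²Λ_i ⊆ ⋀²Λ_0 whenever m ≥ 2, and π ⋀²Λ_i ⊆ π ⋀²Λ_j for i ≤ j; hence any minimal intersection representation ⋂_{i∈I} π^{n_i}⋀²Λ_i with n_0 = 0, n_i > 0 has all n_i = 1 for i ≠ 0 and #I ≤ 2.) -/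

import Mathlib

/-- The exterior algebra over `K` of a `K`-vector space is viewed as an `O`-module via the
algebra map `O → K`. -/
noncomputable instance extModO (O K M : Type*) [CommRing O] [Field K] [Algebra O K]
    [AddCommGroup M] [Module K M] : Module O (ExteriorAlgebra K M) :=
  Module.compHom _ (algebraMap O K)

section

variable (O K : Type*) [CommRing O] [Field K] [Algebra O K] (π : O) (n : ℕ)

/-- The lattice `Λᵢ ⊆ K^n` generated by `π⁻¹e₀, …, π⁻¹e_{i-1}, e_i, …, e_{n-1}`. -/
noncomputable def LambdaChain (i : ℕ) : Submodule O (Fin n → K) :=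
  Submodule.span O (Set.range fun j : Fin n =>
    (if (j : ℕ) < i then (algebraMap O K π)⁻¹ else 1) • (Pi.single j 1 : Fin n → K))

/-- The second exterior power `⋀² Λ` of an `O`-lattice `Λ ⊆ K^n`, viewed as the
`O`-submodule of `⋀² K^n` spanned by wedges of pairs of elements of `Λ`. -/
noncomputable def wedgeSqLat (Λ : Submodule O (Fin n → K)) :
    Submodule O (ExteriorAlgebra K (Fin n → K)) :=
  Submodule.span O {x | ∃ v : Fin 2 → (Fin n → K),
    (∀ t, v t ∈ Λ) ∧ x = ExteriorAlgebra.ιMulti K 2 v}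

/-- Scaling a lattice in `⋀² K^n` by `π^m`, `m ∈ ℕ`. -/
noncomputable def pSmul (m : ℕ) (L : Submodule O (ExteriorAlgebra K (Fin n → K))) :
    Submodule O (ExteriorAlgebra K (Fin n → K)) :=
  Submodule.map (LinearMap.lsmul O (ExteriorAlgebra K (Fin n → K)) (π ^ m)) L

/-- Homothety of lattices in `⋀² K^n`: one is a `π`-power multiple of the other. -/
noncomputable def HomotheticW (L L' : Submodule O (ExteriorAlgebra K (Fin n → K))) :
    Prop :=
  ∃ m : ℕ, L' = pSmul O K π n m L ∨ L = pSmul O K π n m L'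

/-- The convex closure of a set of lattices in `⋀² K^n`: the intersection of all supersets
closed under homothety and under intersection of any two members. -/
noncomputable def convexClosureW (S : Set (Submodule O (ExteriorAlgebra K (Fin n → K)))) :
    Set (Submodule O (ExteriorAlgebra K (Fin n → K))) :=
  ⋂₀ {Γ | S ⊆ Γ ∧ (∀ L ∈ Γ, ∀ M, HomotheticW O K π n L M → M ∈ Γ) ∧
      ∀ L ∈ Γ, ∀ L' ∈ Γ, L ⊓ L' ∈ Γ}

end

section Aux

variable {O K : Type*} [CommRing O] [IsDomain O] [IsDiscreteValuationRing O]
    [Field K] [Algebra O K] [IsFractionRing O K]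
    (π : O) (hπ : Irreducible π) (n : ℕ)

set_option linter.unusedSectionVars false

lemma osmul_def (r : O) (x : ExteriorAlgebra K (Fin n → K)) :
    r • x = algebraMap O K r • x := rfl

include hπ in
lemma amap_ne : algebraMap O K π ≠ 0 := by
  intro h
  exact hπ.ne_zero (IsFractionRing.injective O K (by simpa using h))

lemma pSmul_zero (L : Submodule O (ExteriorAlgebra K (Fin n → K))) :
    pSmul O K π n 0 L = L := by
  have h : (LinearMap.lsmul O (ExteriorAlgebra K (Fin n → K)) (π ^ 0)) = LinearMap.id := by
    ext x; simp
  rw [pSmul, h, Submodule.map_id]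

lemma pSmul_add (a b : ℕ) (L : Submodule O (ExteriorAlgebra K (Fin n → K))) :
    pSmul O K π n (a + b) L = pSmul O K π n a (pSmul O K π n b L) := by
  have h : (LinearMap.lsmul O (ExteriorAlgebra K (Fin n → K)) (π ^ (a + b))) =
      (LinearMap.lsmul O (ExteriorAlgebra K (Fin n → K)) (π ^ a)).comp
        (LinearMap.lsmul O (ExteriorAlgebra K (Fin n → K)) (π ^ b)) := by
    ext x; rw [LinearMap.comp_apply]; simp only [LinearMap.lsmul_apply]; rw [pow_add, mul_smul]
  rw [pSmul, pSmul, pSmul, h, ← Submodule.map_comp]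

include hπ in
lemma lsmul_inj (m : ℕ) :
    Function.Injective (LinearMap.lsmul O (ExteriorAlgebra K (Fin n → K)) (π ^ m)) := by
  intro x y h
  have h' : (algebraMap O K (π ^ m)) • x = (algebraMap O K (π ^ m)) • y := h
  have hne : algebraMap O K (π ^ m) ≠ 0 := by
    rw [map_pow]
    exact pow_ne_zero _ (amap_ne π hπ)
  exact smul_right_injective _ hne h'

include hπ in
lemma pSmul_inf (m : ℕ) (A B : Submodule O (ExteriorAlgebra K (Fin n → K))) :
    pSmul O K π n m (A ⊓ B) = pSmul O K π n m A ⊓ pSmul O K π n m B :=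
  Submodule.map_inf _ (lsmul_inj π hπ n m)

lemma pSmul_le_self (m : ℕ) (L : Submodule O (ExteriorAlgebra K (Fin n → K))) :
    pSmul O K π n m L ≤ L := by
  rintro x ⟨y, hy, rfl⟩
  simpa using Submodule.smul_mem L (π ^ m) hy

lemma pSmul_mono (m : ℕ) {A B : Submodule O (ExteriorAlgebra K (Fin n → K))} (h : A ≤ B) :
    pSmul O K π n m A ≤ pSmul O K π n m B :=
  Submodule.map_mono h

lemma pSmul_le_pSmul {a b : ℕ} (h : a ≤ b) (L : Submodule O (ExteriorAlgebra K (Fin n → K))) :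
    pSmul O K π n b L ≤ pSmul O K π n a L := by
  have hb : b = a + (b - a) := by omega
  rw [hb, pSmul_add]
  exact pSmul_mono π n a (pSmul_le_self π n _ L)

include hπ in
lemma LambdaChain_mono {i j : ℕ} (h : i ≤ j) :
    LambdaChain O K π n i ≤ LambdaChain O K π n j := by
  apply Submodule.span_le.2
  rintro x ⟨t, rfl⟩
  by_cases hti : (t : ℕ) < i
  · have htj : (t : ℕ) < j := lt_of_lt_of_le hti h
    simp only [if_pos hti]
    exact Submodule.subset_span ⟨t, by simp [if_pos htj]⟩
  · simp only [if_neg hti, one_smul]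
    by_cases htj : (t : ℕ) < j
    · have hmem : ((algebraMap O K π)⁻¹ • (Pi.single t 1 : Fin n → K)) ∈ LambdaChain O K π n j :=
        Submodule.subset_span ⟨t, by simp [if_pos htj]⟩
    
      have h2 := Submodule.smul_mem _ π hmem
      have h3 : π • ((algebraMap O K π)⁻¹ • (Pi.single t 1 : Fin n → K))
          = (Pi.single t 1 : Fin n → K) := by
        rw [← algebraMap_smul K π, smul_smul, mul_inv_cancel₀ (amap_ne π hπ), one_smul]
      rwa [h3] at h2
    · exact Submodule.subset_span ⟨t, by simp [if_neg htj]⟩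

include hπ in
lemma smul_mem_Lambda_zero {i : ℕ} {x : Fin n → K} (hx : x ∈ LambdaChain O K π n i) :
    π • x ∈ LambdaChain O K π n 0 := by
  induction hx using Submodule.span_induction with
  | mem x h =>
    obtain ⟨t, rfl⟩ := h
    by_cases hti : (t : ℕ) < i
    · simp only [if_pos hti]
      have h3 : π • ((algebraMap O K π)⁻¹ • (Pi.single t 1 : Fin n → K))
          = (Pi.single t 1 : Fin n → K) := by
        rw [← algebraMap_smul K π, smul_smul, mul_inv_cancel₀ (amap_ne π hπ), one_smul]
      rw [h3]
      exact Submodule.subset_span ⟨t, by simp⟩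
    · simp only [if_neg hti, one_smul]
      exact Submodule.smul_mem _ π (Submodule.subset_span ⟨t, by simp⟩)
  | zero => simp
  | add x y hx hy ihx ihy => rw [smul_add]; exact Submodule.add_mem _ ihx ihy
  | smul a x hx ih => rw [smul_comm]; exact Submodule.smul_mem _ a ih

lemma wedgeSq_mono {Λ Λ' : Submodule O (Fin n → K)} (h : Λ ≤ Λ') :
    wedgeSqLat O K n Λ ≤ wedgeSqLat O K n Λ' :=
  Submodule.span_mono (by rintro x ⟨v, hv, rfl⟩; exact ⟨v, fun t => h (hv t), rfl⟩)

include hπ in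
lemma W_mono {i j : ℕ} (h : i ≤ j) :
    wedgeSqLat O K n (LambdaChain O K π n i) ≤ wedgeSqLat O K n (LambdaChain O K π n j) :=
  wedgeSq_mono n (LambdaChain_mono π hπ n h)

include hπ in
lemma pSmul_two_le (i : ℕ) :
    pSmul O K π n 2 (wedgeSqLat O K n (LambdaChain O K π n i))
      ≤ wedgeSqLat O K n (LambdaChain O K π n 0) := by
  rw [pSmul, wedgeSqLat, Submodule.map_span]
  apply Submodule.span_le.2
  rintro y ⟨x, ⟨v, hv, rfl⟩, rfl⟩
  apply Submodule.subset_span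
  refine ⟨fun t => π • v t, fun t => smul_mem_Lambda_zero π hπ n (hv t), ?_⟩
  have hι : ∀ w : Fin n → K, ExteriorAlgebra.ι K (π • w)
      = algebraMap O K π • ExteriorAlgebra.ι K w := by
    intro w
    rw [← algebraMap_smul K π w, map_smul]
  simp only [LinearMap.lsmul_apply, ExteriorAlgebra.ιMulti_apply, List.ofFn_succ,
    List.ofFn_zero, List.prod_cons, List.prod_nil, mul_one, hι]
  exact (osmul_def n (π ^ 2) _).trans (by rw [smul_mul_smul_comm]; simp [map_pow, pow_two])

include hπ in
lemma redundant {a b i j : ℕ} (h : b ≥ a + 2 ∨ (a ≤ b ∧ j ≤ i)) :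
    pSmul O K π n b (wedgeSqLat O K n (LambdaChain O K π n j))
      ≤ pSmul O K π n a (wedgeSqLat O K n (LambdaChain O K π n i)) := by
  rcases h with h | ⟨hab, hji⟩
  · have hb : b = a + (b - a) := by omega
    rw [hb, pSmul_add]
    refine pSmul_mono π n a (le_trans (pSmul_le_pSmul π n (show 2 ≤ b - a by omega) _) ?_)
    exact le_trans (pSmul_two_le π hπ n j) (W_mono π hπ n (Nat.zero_le i))
  · exact le_trans (pSmul_le_pSmul π n hab _) (pSmul_mono π n a (W_mono π hπ n hji))

include hπ in
lemma three_to_two (a b c i j k : ℕ) (hi : i < n) (hj : j < n) (hk : k < n) :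
    ∃ a' b' i' j', i' < n ∧ j' < n ∧
      pSmul O K π n a (wedgeSqLat O K n (LambdaChain O K π n i))
        ⊓ pSmul O K π n b (wedgeSqLat O K n (LambdaChain O K π n j))
        ⊓ pSmul O K π n c (wedgeSqLat O K n (LambdaChain O K π n k))
      = pSmul O K π n a' (wedgeSqLat O K n (LambdaChain O K π n i'))
        ⊓ pSmul O K π n b' (wedgeSqLat O K n (LambdaChain O K π n j')) := by
  have hd : (b ≥ a + 2 ∨ (a ≤ b ∧ j ≤ i)) ∨ (a ≥ b + 2 ∨ (b ≤ a ∧ i ≤ j))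
      ∨ (c ≥ a + 2 ∨ (a ≤ c ∧ k ≤ i)) ∨ (a ≥ c + 2 ∨ (c ≤ a ∧ i ≤ k))
      ∨ (c ≥ b + 2 ∨ (b ≤ c ∧ k ≤ j)) ∨ (b ≥ c + 2 ∨ (c ≤ b ∧ j ≤ k)) := by omega
  rcases hd with h | h | h | h | h | h
  · exact ⟨b, c, j, k, hj, hk, by rw [inf_eq_right.mpr (redundant π hπ n h)]⟩
  · exact ⟨a, c, i, k, hi, hk, by rw [inf_eq_left.mpr (redundant π hπ n h)]⟩
  · exact ⟨b, c, j, k, hj, hk, by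
      rw [inf_assoc, inf_eq_right.mpr (le_trans inf_le_right (redundant π hπ n h))]⟩
  · exact ⟨a, b, i, j, hi, hj, by
      rw [inf_eq_left.mpr (le_trans inf_le_left (redundant π hπ n h))]⟩
  · exact ⟨a, c, i, k, hi, hk, by
      rw [inf_assoc, inf_eq_right.mpr (redundant π hπ n h)]⟩
  · exact ⟨a, b, i, j, hi, hj, by
      rw [inf_eq_left.mpr (le_trans inf_le_right (redundant π hπ n h))]⟩

end Aux

/-- For `n ≥ 2`, every lattice class in the convex closure of the wedge squares
`{[⋀²Λ₀], …, [⋀²Λ_{n-1}]}` of the standard lattice chain in `K^n` already lies in the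
convex closure of a two-element subset `{[⋀²Λᵢ], [⋀²Λⱼ]}`. -/


theorem stmt14 {O K : Type*} [CommRing O] [IsDomain O] [IsDiscreteValuationRing O]
    [Field K] [Algebra O K] [IsFractionRing O K]
    (π : O) (hπ : Irreducible π) (n : ℕ) (hn : 2 ≤ n) :
    ∀ M ∈ convexClosureW O K π n
        {L | ∃ i : ℕ, i < n ∧ L = wedgeSqLat O K n (LambdaChain O K π n i)},
      ∃ i j : ℕ, i < n ∧ j < n ∧
        M ∈ convexClosureW O K π n
          {wedgeSqLat O K n (LambdaChain O K π n i),
           wedgeSqLat O K n (LambdaChain O K π n j)} := by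
  intro M hM
  set W : ℕ → Submodule O (ExteriorAlgebra K (Fin n → K)) :=
    fun i => wedgeSqLat O K n (LambdaChain O K π n i) with hWdef
  have hMΓ : ∃ i j a b c : ℕ, i < n ∧ j < n ∧
      pSmul O K π n c M = pSmul O K π n a (W i) ⊓ pSmul O K π n b (W j) := by
    refine hM {M' | ∃ i j a b c : ℕ, i < n ∧ j < n ∧
      pSmul O K π n c M' = pSmul O K π n a (W i) ⊓ pSmul O K π n b (W j)} ⟨?_, ?_, ?_⟩
    · rintro L ⟨i, hi, rfl⟩
      exact ⟨i, i, 0, 0, 0, hi, hi, by simp only [pSmul_zero, inf_idem, hWdef]⟩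
    · rintro L ⟨i, j, a, b, c, hi, hj, hL⟩ M' ⟨m, hm | hm⟩
      · refine ⟨i, j, a + m, b + m, c, hi, hj, ?_⟩
        calc pSmul O K π n c M'
            = pSmul O K π n (m + c) L := by
              rw [hm, ← pSmul_add, Nat.add_comm c m]
          _ = pSmul O K π n m (pSmul O K π n c L) := pSmul_add π n m c L
          _ = pSmul O K π n m (pSmul O K π n a (W i) ⊓ pSmul O K π n b (W j)) := by rw [hL]
          _ = pSmul O K π n m (pSmul O K π n a (W i))
                ⊓ pSmul O K π n m (pSmul O K π n b (W j)) := pSmul_inf π hπ n m _ _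
          _ = pSmul O K π n (a + m) (W i) ⊓ pSmul O K π n (b + m) (W j) := by
              rw [← pSmul_add, ← pSmul_add, Nat.add_comm m a, Nat.add_comm m b]
      · refine ⟨i, j, a, b, c + m, hi, hj, ?_⟩
        rw [pSmul_add, ← hm, hL]
    · rintro L ⟨i, j, a, b, c, hi, hj, hL⟩ L' ⟨i', j', a', b', c', hi', hj', hL'⟩
      have key : pSmul O K π n (c + c') (L ⊓ L')
          = pSmul O K π n (a + c') (W i) ⊓ pSmul O K π n (b + c') (W j)
            ⊓ (pSmul O K π n (a' + c) (W i') ⊓ pSmul O K π n (b' + c) (W j')) := by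
        rw [pSmul_inf π hπ]
        congr 1
        · calc pSmul O K π n (c + c') L
              = pSmul O K π n c' (pSmul O K π n c L) := by
                rw [Nat.add_comm c c', pSmul_add]
            _ = pSmul O K π n c' (pSmul O K π n a (W i) ⊓ pSmul O K π n b (W j)) := by rw [hL]
            _ = pSmul O K π n c' (pSmul O K π n a (W i))
                  ⊓ pSmul O K π n c' (pSmul O K π n b (W j)) := pSmul_inf π hπ n c' _ _
            _ = pSmul O K π n (a + c') (W i) ⊓ pSmul O K π n (b + c') (W j) := by
                rw [← pSmul_add, ← pSmul_add, Nat.add_comm c' a, Nat.add_comm c' b]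
        · calc pSmul O K π n (c + c') L'
              = pSmul O K π n c (pSmul O K π n c' L') := pSmul_add π n c c' L'
            _ = pSmul O K π n c (pSmul O K π n a' (W i') ⊓ pSmul O K π n b' (W j')) := by
                rw [hL']
            _ = pSmul O K π n c (pSmul O K π n a' (W i'))
                  ⊓ pSmul O K π n c (pSmul O K π n b' (W j')) := pSmul_inf π hπ n c _ _
            _ = pSmul O K π n (a' + c) (W i') ⊓ pSmul O K π n (b' + c) (W j') := by
                rw [← pSmul_add, ← pSmul_add, Nat.add_comm c a', Nat.add_comm c b']
      obtain ⟨a2, b2, i2, j2, hi2, hj2, h32⟩ :=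
        three_to_two (O := O) (K := K) π hπ n (a + c') (b + c') (a' + c) i j i' hi hj hi'
      obtain ⟨a3, b3, i3, j3, hi3, hj3, h33⟩ :=
        three_to_two (O := O) (K := K) π hπ n a2 b2 (b' + c) i2 j2 j' hi2 hj2 hj'
      exact ⟨i3, j3, a3, b3, c + c', hi3, hj3, by rw [key, ← inf_assoc, h32, h33]⟩
  obtain ⟨i, j, a, b, c, hi, hj, hEq⟩ := hMΓ
  refine ⟨i, j, hi, hj, ?_⟩
  rintro Γ' ⟨hS', hHom', hInf'⟩
  have h1 : W i ∈ Γ' := hS' (Set.mem_insert _ _)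
  have h2 : W j ∈ Γ' := hS' (Set.mem_insert_iff.2 (Or.inr rfl))
  have h3 := hHom' _ h1 (pSmul O K π n a (W i)) ⟨a, Or.inl rfl⟩
  have h4 := hHom' _ h2 (pSmul O K π n b (W j)) ⟨b, Or.inl rfl⟩
  have h5 := hInf' _ h3 _ h4
  exact hHom' _ h5 M ⟨c, Or.inr hEq.symm⟩
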